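/- arXiv:1503.05729 — 3 statements merged into one kernel-verified Lean document; each statement's English description precedes it below -/
import Mathlib

section
/- Let k° be a height-one valuation ring with fraction field k, 0 ≠ π ∈ k°, and A = k°[t_0,…,t_l]/(t_0⋯t_m − π) with 0 ≤ m ≤ l. Every element a of A admits a unique representation a = Σ_{n ∈ ℤ^m × ℕ^{l−m}} a_n t^n (where t_0 is replaced by π t_1^{-1}⋯t_m^{-1} when negative exponents appear) such that |a_n| ≤ |π|^{−min(0, n_1,…,n_m)} for all n. -/
/-!
Existence: in A we have t₀⋯t_m = π, so a monomial t^e can be rewritten by splitting off the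
largest power (t₀⋯t_m)^d whose removal leaves the exponent of a special monomial; this turns t^e
into π^d times a special monomial.

Uniqueness: the substitution t₀ ↦ π t₁⁻¹⋯t_m⁻¹ kills the relation, hence maps A to the Laurent
polynomials k°[t₁^{±1},…,t_l^{±1}], and it sends the special monomial with coefficient b π^{D(n)}
to b π^{D(n)} t^n. Distinct special indices give distinct Laurent monomials, and π is a
nonzerodivisor, so the coefficients b are read off from the image of a.
-/

open scoped NNReal
open MvPolynomial

noncomputable section

namespace Altered

variable {k : Type*} [Field k]

/-- The defining ideal (t₀⋯t_m - π) of a model semistable scheme. -/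
def modelIdeal (v : Valuation k ℝ≥0) (l m : ℕ) (π : v.integer) :
    Ideal (MvPolynomial (Fin (l + 1)) v.integer) :=
  Ideal.span
    {(∏ i ∈ Finset.univ.filter (fun i : Fin (l + 1) => (i : ℕ) ≤ m), X i) - C π}

/-- The coordinate ring A = k°[t₀,…,t_l]/(t₀⋯t_m − π) of a model semistable scheme. -/
abbrev ModelRing (v : Valuation k ℝ≥0) (l m : ℕ) (π : v.integer) :=
  MvPolynomial (Fin (l + 1)) v.integer ⧸ modelIdeal v l m π

variable (v : Valuation k ℝ≥0) (l m : ℕ) (π : v.integer)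

/-- An exponent tuple n ∈ ℤ^m × ℕ^(l-m): index j : Fin l stands for the variable
t_{j+1}, and exponents of t_{j+1} for j ≥ m must be nonnegative. -/
def IsSpecialIndex (n : Fin l → ℤ) : Prop := ∀ j : Fin l, m ≤ (j : ℕ) → 0 ≤ n j

/-- D(n) = −min(0, n₁,…,n_m). -/
def negDeg (n : Fin l → ℤ) : ℕ :=
  (Finset.univ.filter (fun j : Fin l => (j : ℕ) < m)).sup fun j => (-n j).toNat

/-- The special monomial a_n t^n with coefficient a_n = b·π^{D(n)}
(so that the bound |a_n| ≤ |π|^{−min(0,n₁,…,n_m)} holds automatically),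
written as an honest element of A: b·π^{D}·t^n = b·t₀^D·∏_{1≤i≤m} t_i^{n_i+D}·∏_{i>m} t_i^{n_i}. -/
def specialMonomial (b : v.integer) (n : Fin l → ℤ) : ModelRing v l m π :=
  Ideal.Quotient.mk (modelIdeal v l m π)
    (C b * X (0 : Fin (l + 1)) ^ negDeg l m n *
      ∏ j : Fin l, X j.succ ^
        (if (j : ℕ) < m then (n j + negDeg l m n).toNat else (n j).toNat))

/-- The set Δ of monomial semivaluation parameters:
r ∈ [0,1]^{l+1} with r₀⋯r_m = |π|. -/
def Delta : Set (Fin (l + 1) → ℝ≥0) :=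
  {r | (∀ i, r i ≤ 1) ∧
    ∏ i ∈ Finset.univ.filter (fun i : Fin (l + 1) => (i : ℕ) ≤ m), r i = v (π : k)}

/-- The value |a_n t^n|_r = |a_n|·r^n of the special monomial with coefficient
a_n = b·π^{D(n)} at r ∈ Δ.  (On Δ, r_i ≠ 0 whenever a negative exponent occurs.) -/
def monValue (b : v.integer) (n : Fin l → ℤ) (r : Fin (l + 1) → ℝ≥0) : ℝ≥0 :=
  v (b : k) * v (π : k) ^ (negDeg l m n : ℤ) * ∏ j : Fin l, r j.succ ^ (n j)

end Altered

namespace Altered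

open Finset
section Exponents

variable (l m : ℕ)

def piExp : Fin (l + 1) →₀ ℕ :=
  ∑ i ∈ univ.filter (fun i : Fin (l + 1) => (i : ℕ) ≤ m), Finsupp.single i 1

lemma piExp_apply (i : Fin (l + 1)) : piExp l m i = if (i : ℕ) ≤ m then 1 else 0 := by
  classical
  simp [piExp, Finsupp.finsetSum_apply, Finsupp.single_apply]

def specialExp (n : Fin l → ℤ) : Fin (l + 1) →₀ ℕ :=
  Finsupp.equivFunOnFinite.symm <| Fin.cons (negDeg l m n) fun j =>
    if (j : ℕ) < m then (n j + negDeg l m n).toNat else (n j).toNat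

@[simp] lemma specialExp_zero (n : Fin l → ℤ) : specialExp l m n 0 = negDeg l m n := rfl

@[simp] lemma specialExp_succ (n : Fin l → ℤ) (j : Fin l) :
    specialExp l m n j.succ =
      if (j : ℕ) < m then (n j + negDeg l m n).toNat else (n j).toNat := by
  simp [specialExp]

def laurentExp (e : Fin (l + 1) →₀ ℕ) : Fin l → ℤ :=
  fun j => e j.succ - if (j : ℕ) < m then (e 0 : ℤ) else 0

lemma laurentExp_add (e f : Fin (l + 1) →₀ ℕ) :
    laurentExp l m (e + f) = laurentExp l m e + laurentExp l m f := by
  funext j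
  simp only [laurentExp, Finsupp.add_apply, Pi.add_apply]
  split_ifs <;> push_cast <;> ring

@[simp] lemma laurentExp_zero : laurentExp l m 0 = 0 := by
  funext j
  simp [laurentExp]

lemma laurentExp_piExp : laurentExp l m (piExp l m) = 0 := by
  funext j
  simp only [laurentExp, piExp_apply, Fin.val_succ, Fin.val_zero, Pi.zero_apply, zero_le, if_true]
  split_ifs <;> omega

lemma isSpecialIndex_laurentExp (e : Fin (l + 1) →₀ ℕ) :
    IsSpecialIndex l m (laurentExp l m e) := by
  intro j hj
  simp [laurentExp, if_neg (not_lt.mpr hj)]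

lemma toNat_neg_le_negDeg (n : Fin l → ℤ) {j : Fin l} (hj : (j : ℕ) < m) :
    (-n j).toNat ≤ negDeg l m n :=
  le_sup (f := fun j => (-n j).toNat) (mem_filter.mpr ⟨mem_univ j, hj⟩)

lemma negDeg_laurentExp_le (e : Fin (l + 1) →₀ ℕ) : negDeg l m (laurentExp l m e) ≤ e 0 :=
  Finset.sup_le fun j hj => by
    simp only [laurentExp, if_pos (mem_filter.mp hj).2]
    omega

lemma laurentExp_specialExp {n : Fin l → ℤ} (hn : IsSpecialIndex l m n) :
    laurentExp l m (specialExp l m n) = n := by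
  funext j
  by_cases hj : (j : ℕ) < m
  · have := toNat_neg_le_negDeg l m n hj
    simp only [laurentExp, specialExp_succ, specialExp_zero, if_pos hj]
    omega
  · have := hn j (not_lt.mp hj)
    simp only [laurentExp, specialExp_succ, if_neg hj]
    omega

lemma specialExp_laurentExp_add (e : Fin (l + 1) →₀ ℕ) :
    specialExp l m (laurentExp l m e) + (e 0 - negDeg l m (laurentExp l m e)) • piExp l m = e := by
  have hle := negDeg_laurentExp_le l m e
  ext i
  induction i using Fin.cases with
  | zero => simp [piExp_apply]; omega
  | succ j =>
    by_cases hj : (j : ℕ) < m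
    · have := toNat_neg_le_negDeg l m (laurentExp l m e) hj
      simp [piExp_apply, laurentExp, hj, Nat.succ_le_of_lt hj] at this ⊢
      omega
    · simp [piExp_apply, laurentExp, hj]

end Exponents

section LaurentEmbedding

variable {R : Type*} [CommRing R] (l m : ℕ) (π : R)

/-- The substitution t₀ ↦ π t₁⁻¹⋯t_m⁻¹ into Laurent polynomials in t₁,…,t_l, on monomials. -/
def laurentMonomial : Multiplicative (Fin (l + 1) →₀ ℕ) →* AddMonoidAlgebra R (Fin l → ℤ) where
  toFun e := AddMonoidAlgebra.single (laurentExp l m e.toAdd) (π ^ e.toAdd 0)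
  map_one' := by simp [AddMonoidAlgebra.one_def]
  map_mul' e f := by
    simp [AddMonoidAlgebra.single_mul_single, laurentExp_add, pow_add]

def laurentHom : MvPolynomial (Fin (l + 1)) R →ₐ[R] AddMonoidAlgebra R (Fin l → ℤ) :=
  AddMonoidAlgebra.lift R _ _ (laurentMonomial l m π)

lemma laurentHom_monomial (e : Fin (l + 1) →₀ ℕ) (r : R) :
    laurentHom l m π (monomial e r) = AddMonoidAlgebra.single (laurentExp l m e) (r * π ^ e 0) := by
  simp [laurentHom, laurentMonomial, MvPolynomial.monomial, AddMonoidAlgebra.smul_single]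

lemma laurentHom_monomial_piExp_sub_C :
    laurentHom l m π (monomial (piExp l m) 1 - C π) = 0 := by
  rw [map_sub, laurentHom_monomial, laurentExp_piExp, piExp_apply, Fin.val_zero,
    if_pos (Nat.zero_le m), pow_one, one_mul, algHom_C, sub_eq_zero]
  rfl

end LaurentEmbedding

section ModelRing

variable {k : Type*} [Field k] (v : Valuation k ℝ≥0) (l m : ℕ) (π : v.integer)

lemma prod_X_eq_monomial_piExp :
    ∏ i ∈ univ.filter (fun i : Fin (l + 1) => (i : ℕ) ≤ m),
      (X i : MvPolynomial (Fin (l + 1)) v.integer) = monomial (piExp l m) 1 :=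
  (monomial_sum_one _ _).symm

lemma mk_monomial_add_piExp (f : Fin (l + 1) →₀ ℕ) (r : v.integer) :
    Ideal.Quotient.mk (modelIdeal v l m π) (monomial (f + piExp l m) r) =
      Ideal.Quotient.mk (modelIdeal v l m π) (monomial f (π * r)) := by
  rw [Ideal.Quotient.eq, modelIdeal, Ideal.mem_span_singleton, prod_X_eq_monomial_piExp]
  exact ⟨monomial f r, by rw [sub_mul, monomial_mul, one_mul, add_comm f, C_mul_monomial]⟩

lemma mk_monomial_add_smul_piExp (f : Fin (l + 1) →₀ ℕ) (d : ℕ) (r : v.integer) :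
    Ideal.Quotient.mk (modelIdeal v l m π) (monomial (f + d • piExp l m) r) =
      Ideal.Quotient.mk (modelIdeal v l m π) (monomial f (π ^ d * r)) := by
  induction d generalizing r with
  | zero => simp
  | succ d ih => rw [succ_nsmul, ← add_assoc, mk_monomial_add_piExp, ih, pow_succ, mul_assoc]

lemma specialMonomial_eq_mk_monomial (b : v.integer) (n : Fin l → ℤ) :
    specialMonomial v l m π b n =
      Ideal.Quotient.mk (modelIdeal v l m π) (monomial (specialExp l m n) b) := by
  rw [specialMonomial, monomial_eq, Finsupp.prod_fintype _ _ (fun _ => pow_zero _),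
    Fin.prod_univ_succ, specialExp_zero]
  simp only [specialExp_succ, mul_assoc]

lemma mk_monomial_eq_specialMonomial (e : Fin (l + 1) →₀ ℕ) (r : v.integer) :
    Ideal.Quotient.mk (modelIdeal v l m π) (monomial e r) =
      specialMonomial v l m π (π ^ (e 0 - negDeg l m (laurentExp l m e)) * r)
        (laurentExp l m e) := by
  rw [specialMonomial_eq_mk_monomial, ← mk_monomial_add_smul_piExp,
    specialExp_laurentExp_add]

lemma specialMonomial_zero (n : Fin l → ℤ) : specialMonomial v l m π 0 n = 0 := by
  simp [specialMonomial]

lemma specialMonomial_add (b b' : v.integer) (n : Fin l → ℤ) :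
    specialMonomial v l m π (b + b') n =
      specialMonomial v l m π b n + specialMonomial v l m π b' n := by
  simp only [specialMonomial, map_add, add_mul]

lemma exists_specialRepr (a : ModelRing v l m π) :
    ∃ c : (Fin l → ℤ) →₀ v.integer, (∀ n ∈ c.support, IsSpecialIndex l m n) ∧
      a = ∑ n ∈ c.support, specialMonomial v l m π (c n) n := by
  obtain ⟨p, rfl⟩ := Ideal.Quotient.mk_surjective a
  induction p using MvPolynomial.induction_on' with
  | monomial e r =>
    refine ⟨Finsupp.single (laurentExp l m e) (π ^ (e 0 - negDeg l m (laurentExp l m e)) * r),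
      fun n hn => ?_, ?_⟩
    · rw [Finset.mem_singleton.mp (Finsupp.support_single_subset hn)]
      exact isSpecialIndex_laurentExp l m e
    · rw [mk_monomial_eq_specialMonomial]
      exact (Finsupp.sum_single_index (h := fun n b => specialMonomial v l m π b n)
        (specialMonomial_zero v l m π _)).symm
  | add p q hp hq =>
    obtain ⟨c, hc, hpc⟩ := hp
    obtain ⟨c', hc', hqc'⟩ := hq
    refine ⟨c + c', fun n hn => ?_, ?_⟩
    · rcases Finset.mem_union.mp (Finsupp.support_add hn) with h | h
      exacts [hc n h, hc' n h]
    · rw [map_add, hpc, hqc']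
      exact (Finsupp.sum_add_index' (h := fun n b => specialMonomial v l m π b n)
        (specialMonomial_zero v l m π)
        fun n b b' => specialMonomial_add v l m π b b' n).symm

def modelLaurentHom : ModelRing v l m π →ₐ[v.integer] AddMonoidAlgebra v.integer (Fin l → ℤ) :=
  Ideal.Quotient.liftₐ _ (laurentHom l m π) fun x hx => by
    obtain ⟨y, rfl⟩ := Ideal.mem_span_singleton.mp hx
    rw [map_mul, prod_X_eq_monomial_piExp, laurentHom_monomial_piExp_sub_C, zero_mul]

lemma modelLaurentHom_mk (x : MvPolynomial (Fin (l + 1)) v.integer) :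
    modelLaurentHom v l m π (Ideal.Quotient.mk _ x) = laurentHom l m π x :=
  rfl

lemma modelLaurentHom_specialMonomial (b : v.integer) {n : Fin l → ℤ} (hn : IsSpecialIndex l m n) :
    modelLaurentHom v l m π (specialMonomial v l m π b n) =
      AddMonoidAlgebra.single n (b * π ^ negDeg l m n) := by
  rw [specialMonomial_eq_mk_monomial, modelLaurentHom_mk, laurentHom_monomial,
    laurentExp_specialExp l m hn, specialExp_zero]

lemma coeff_modelLaurentHom_sum_specialMonomial (c : (Fin l → ℤ) →₀ v.integer)
    (hc : ∀ n ∈ c.support, IsSpecialIndex l m n) (n : Fin l → ℤ) :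
    (modelLaurentHom v l m π (∑ n ∈ c.support, specialMonomial v l m π (c n) n)).coeff n =
      c n * π ^ negDeg l m n := by
  classical
  rw [map_sum, sum_congr rfl fun n hn => modelLaurentHom_specialMonomial v l m π (c n) (hc n hn),
    AddMonoidAlgebra.coeff_sum, Finset.sum_apply']
  simp only [AddMonoidAlgebra.coeff_single, Finsupp.single_apply, sum_ite_eq']
  split_ifs with h
  · rfl
  · rw [Finsupp.notMem_support_iff.mp h, zero_mul]

lemma eq_of_sum_specialMonomial_eq (hπ : π ≠ 0) {c c' : (Fin l → ℤ) →₀ v.integer}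
    (hc : ∀ n ∈ c.support, IsSpecialIndex l m n) (hc' : ∀ n ∈ c'.support, IsSpecialIndex l m n)
    (h : ∑ n ∈ c.support, specialMonomial v l m π (c n) n =
      ∑ n ∈ c'.support, specialMonomial v l m π (c' n) n) : c = c' := by
  refine Finsupp.ext fun n => ?_
  have hcoeff := congrArg (fun a => (modelLaurentHom v l m π a).coeff n) h
  simp only [coeff_modelLaurentHom_sum_specialMonomial v l m π _ hc,
    coeff_modelLaurentHom_sum_specialMonomial v l m π _ hc'] at hcoeff
  exact mul_right_cancel₀ (pow_ne_zero _ hπ) hcoeff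

end ModelRing

theorem exists_unique_special_representation_general
    {k : Type*} [Field k] (v : Valuation k ℝ≥0)
    (l m : ℕ) (π : v.integer) (hπ : π ≠ 0)
    (a : ModelRing v l m π) :
    ∃! c : (Fin l → ℤ) →₀ v.integer,
      (∀ n ∈ c.support, IsSpecialIndex l m n) ∧
      a = ∑ n ∈ c.support, specialMonomial v l m π (c n) n := by
  obtain ⟨c, hc, rfl⟩ := exists_specialRepr v l m π a
  exact ⟨c, ⟨hc, rfl⟩, fun c' ⟨hc', h⟩ => eq_of_sum_specialMonomial_eq v l m π hπ hc' hc h.symm⟩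

theorem exists_unique_special_representation
    {k : Type*} [Field k] (v : Valuation k ℝ≥0)
    (hv : ∃ x : k, v x ≠ 0 ∧ v x ≠ 1)
    (l m : ℕ) (hm : m ≤ l) (π : v.integer) (hπ : π ≠ 0)
    (a : ModelRing v l m π) :
    ∃! c : (Fin l → ℤ) →₀ v.integer,
      (∀ n ∈ c.support, IsSpecialIndex l m n) ∧
      a = ∑ n ∈ c.support, specialMonomial v l m π (c n) n :=
  exists_unique_special_representation_general v l m π hπ a

end Altered
end
end

section
/- Let A = k°[t_0,…,t_l]/(t_0⋯t_m − π) with 0 ≠ π ∈ k°, and let a = a_n t^n and a' = a'_{n'} t^{n'} be two special monomials. Then a' ∈ aA if and only if |a_n| ≥ |a'_{n'}|, |a_n π^{n_i}| ≥ |a'_{n'} π^{n'_i}| for 1 ≤ i ≤ m, and n_i ≤ n'_i for i > m. -/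
open scoped NNReal
open MvPolynomial

noncomputable section

/-!
Sending `t₀ ↦ π·(t₁⋯t_m)⁻¹` and `tᵢ ↦ tᵢ` for `i ≥ 1` kills `t₀⋯t_m − π`, so it maps `A` into the
Laurent polynomials `k[t₁^{±1},…,t_l^{±1}]`, the special monomial `a_n tⁿ` going to the Laurent
monomial `a_n tⁿ`. For weights `s ∈ (0,1]^l` with `|π| ≤ s₁⋯s_m`, the weighted Gauss norm
`max_e |c_e| sᵉ` is ultrametric, submultiplicative against monomials and `≤ 1` on the images of
`k°, t₀, …, t_l`, hence on the image of `A`. So `a' = a·q` forces `|a'_{n'}| s^{n'} ≤ |a_n| sⁿ`;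
the weights `s = 1`, `s = |π|` in one coordinate `i ≤ m`, and `s = ε → 0` in one coordinate `i > m`
give the three conditions.

Conversely, let `κ = max(0, nᵢ − n'ᵢ : i ≤ m)`. The monomial
`q = t₀^κ ∏_{i ≤ m} tᵢ^{n'ᵢ − nᵢ + κ} ∏_{i > m} tᵢ^{n'ᵢ − nᵢ}` has nonnegative exponents, and since
`t₀⋯t_m = π` in `A`, `b'·a·q = b·π^μ·a'` with `μ = D(n) + κ − D(n') ≥ 0`. The conditions give
`|a'_{n'}| ≤ |a_n π^κ|`, i.e. `|b'| ≤ |b π^μ|`, so `b'/(b π^μ) ∈ k°` and `a' = a·q·b'/(b π^μ)`.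
-/

namespace Altered

lemma mul_zpow_le_mul_zpow_iff {A B z : ℝ≥0} {p q : ℤ} (hz : z ≠ 0) :
    A * z ^ p ≤ B * z ^ q ↔ A ≤ B * z ^ (q - p) := by
  rw [zpow_sub₀ hz, mul_div_assoc', le_div_iff₀ (by positivity)]

lemma le_mul_zpow_sup_toNat {ι : Type*} (s : Finset ι) {A B z : ℝ≥0} (hz : z ≠ 0)
    {p q : ι → ℤ} (h0 : A ≤ B) (h : ∀ j ∈ s, A * z ^ p j ≤ B * z ^ q j) :
    A ≤ B * z ^ ((s.sup fun j => (q j - p j).toNat : ℕ) : ℤ) := by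
  refine Finset.sup_induction (p := fun x : ℕ => A ≤ B * z ^ (x : ℤ)) (by simpa using h0)
    (fun x hx y hy => by rcases max_choice x y with h | h <;> rwa [h]) fun j hj => ?_
  rcases le_total 0 (q j - p j) with hj' | hj'
  · rw [Int.toNat_of_nonneg hj']
    exact (mul_zpow_le_mul_zpow_iff hz).1 (h j hj)
  · simpa [Int.toNat_eq_zero.2 hj'] using h0

open Filter Topology in
lemma le_of_forall_mul_zpow_le {A B : ℝ≥0} {p q : ℤ} (hA : A ≠ 0)
    (h : ∀ ε : ℝ≥0, ε ≠ 0 → ε ≤ 1 → A * ε ^ p ≤ B * ε ^ q) : q ≤ p := by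
  by_contra! hpq
  have hle : ∀ N : ℕ, A ≤ B * (2⁻¹ : ℝ≥0) ^ N := fun N => by
    have hε0 : (2⁻¹ : ℝ≥0) ^ N ≠ 0 := by positivity
    have hε1 : (2⁻¹ : ℝ≥0) ^ N ≤ 1 := pow_le_one₀ zero_le (by norm_num)
    calc A ≤ B * ((2⁻¹ : ℝ≥0) ^ N) ^ (q - p) := (mul_zpow_le_mul_zpow_iff hε0).1 (h _ hε0 hε1)
      _ ≤ B * ((2⁻¹ : ℝ≥0) ^ N) ^ (1 : ℤ) := by
        gcongr B * ?_
        exact zpow_le_zpow_right_of_le_one₀ (pos_of_ne_zero hε0) hε1 (by omega)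
      _ = B * (2⁻¹ : ℝ≥0) ^ N := by rw [zpow_one]
  have hlim : Tendsto (fun N : ℕ => B * (2⁻¹ : ℝ≥0) ^ N) atTop (𝓝 0) := by
    simpa using (NNReal.tendsto_pow_atTop_nhds_zero_of_lt_one two_inv_lt_one).const_mul B
  exact hA (le_antisymm (ge_of_tendsto' hlim hle) zero_le)

section GaussNorm

variable {R ι : Type*} [Ring R] [Fintype ι] (v : Valuation R ℝ≥0) (s : ι → ℝ≥0)

def monomialWeight (e : ι → ℤ) : ℝ≥0 := ∏ j, s j ^ e j

@[simp]
lemma monomialWeight_zero : monomialWeight s 0 = 1 := by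
  simp [monomialWeight]

@[simp]
lemma monomialWeight_one (e : ι → ℤ) : monomialWeight (1 : ι → ℝ≥0) e = 1 := by
  simp [monomialWeight]

lemma monomialWeight_add {s : ι → ℝ≥0} (hs : ∀ j, s j ≠ 0) (d e : ι → ℤ) :
    monomialWeight s (d + e) = monomialWeight s d * monomialWeight s e := by
  simp only [monomialWeight, Pi.add_apply, zpow_add₀ (hs _), Finset.prod_mul_distrib]

lemma monomialWeight_update_one [DecidableEq ι] (j : ι) (x : ℝ≥0) (e : ι → ℤ) :
    monomialWeight (Function.update 1 j x) e = x ^ e j := by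
  rw [monomialWeight, Fintype.prod_eq_single j fun i hi => by simp [hi]]
  simp

def gaussNorm (f : AddMonoidAlgebra R (ι → ℤ)) : ℝ≥0 :=
  f.coeff.support.sup fun e => v (f.coeff e) * monomialWeight s e

lemma le_gaussNorm (f : AddMonoidAlgebra R (ι → ℤ)) (e : ι → ℤ) :
    v (f.coeff e) * monomialWeight s e ≤ gaussNorm v s f := by
  by_cases he : e ∈ f.coeff.support
  · exact Finset.le_sup (f := fun e => v (f.coeff e) * monomialWeight s e) he
  · simp [Finsupp.notMem_support_iff.mp he]

lemma gaussNorm_le_iff {f : AddMonoidAlgebra R (ι → ℤ)} {r : ℝ≥0} :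
    gaussNorm v s f ≤ r ↔ ∀ e, v (f.coeff e) * monomialWeight s e ≤ r :=
  ⟨fun h e => (le_gaussNorm v s f e).trans h, fun h => Finset.sup_le fun e _ => h e⟩

lemma gaussNorm_single (e : ι → ℤ) (a : R) :
    gaussNorm v s (AddMonoidAlgebra.single e a) = v a * monomialWeight s e := by
  refine le_antisymm ((gaussNorm_le_iff v s).2 fun d => ?_) ?_
  · rw [AddMonoidAlgebra.coeff_single, Finsupp.single_apply]
    split_ifs with h
    · rw [h]
    · simp
  · simpa using le_gaussNorm v s (AddMonoidAlgebra.single e a) e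

lemma gaussNorm_add_le (f g : AddMonoidAlgebra R (ι → ℤ)) :
    gaussNorm v s (f + g) ≤ max (gaussNorm v s f) (gaussNorm v s g) := by
  refine (gaussNorm_le_iff v s).2 fun e => ?_
  calc v ((f + g).coeff e) * monomialWeight s e
      ≤ max (v (f.coeff e)) (v (g.coeff e)) * monomialWeight s e := by
        rw [AddMonoidAlgebra.coeff_add, Finsupp.add_apply]
        exact mul_le_mul_left (v.map_add _ _) _
    _ = max (v (f.coeff e) * monomialWeight s e) (v (g.coeff e) * monomialWeight s e) :=
        max_mul_of_nonneg _ _ zero_le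
    _ ≤ max (gaussNorm v s f) (gaussNorm v s g) :=
        max_le_max (le_gaussNorm v s f e) (le_gaussNorm v s g e)

lemma gaussNorm_single_mul_le {s : ι → ℝ≥0} (hs : ∀ j, s j ≠ 0) (d : ι → ℤ) (a : R)
    (f : AddMonoidAlgebra R (ι → ℤ)) :
    gaussNorm v s (AddMonoidAlgebra.single d a * f) ≤
      v a * monomialWeight s d * gaussNorm v s f := by
  refine (gaussNorm_le_iff v s).2 fun e => ?_
  rw [AddMonoidAlgebra.coeff_single_mul_apply, v.map_mul]
  calc v a * v (f.coeff (-d + e)) * monomialWeight s e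
      = v a * monomialWeight s d * (v (f.coeff (-d + e)) * monomialWeight s (-d + e)) := by
        rw [← add_neg_cancel_left d e, monomialWeight_add hs, neg_add_cancel_left]; ring
    _ ≤ v a * monomialWeight s d * gaussNorm v s f := mul_le_mul_right (le_gaussNorm v s f _) _

end GaussNorm

section NegDeg

variable {l m : ℕ}

lemma neg_le_negDeg (n : Fin l → ℤ) {j : Fin l} (hj : (j : ℕ) < m) : -n j ≤ negDeg l m n := by
  have : (-n j).toNat ≤ negDeg l m n :=
    Finset.le_sup (f := fun j => (-n j).toNat) (by simpa using hj)
  omega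

lemma negDeg_le {n : Fin l → ℤ} {c : ℕ} (h : ∀ j : Fin l, (j : ℕ) < m → -n j ≤ c) :
    negDeg l m n ≤ c :=
  Finset.sup_le fun j hj => by have := h j (Finset.mem_filter.1 hj).2; omega

end NegDeg

section Laurent

open AddMonoidAlgebra

variable {k : Type*} [Field k] (v : Valuation k ℝ≥0) (l m : ℕ) (π : v.integer)

def firstExponents : Fin l → ℤ := fun j => if (j : ℕ) < m then 1 else 0

def laurentPoly : MvPolynomial (Fin (l + 1)) v.integer →+* AddMonoidAlgebra k (Fin l → ℤ) :=
  eval₂Hom (singleZeroRingHom.comp (algebraMap v.integer k))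
    (Fin.cases (single (-firstExponents l m) (π : k)) fun j => single (Pi.single j 1) 1)

@[simp]
lemma laurentPoly_C (a : v.integer) : laurentPoly v l m π (C a) = single 0 (a : k) :=
  eval₂Hom_C _ _ _

@[simp]
lemma laurentPoly_X_zero : laurentPoly v l m π (X 0) = single (-firstExponents l m) (π : k) :=
  eval₂Hom_X' _ _ _

@[simp]
lemma laurentPoly_X_succ (j : Fin l) :
    laurentPoly v l m π (X j.succ) = single (Pi.single j 1) 1 :=
  eval₂Hom_X' _ _ _

lemma prod_filter_le_eq_mul {M : Type*} [CommMonoid M] (g : Fin (l + 1) → M) :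
    ∏ i ∈ Finset.univ.filter (fun i : Fin (l + 1) => (i : ℕ) ≤ m), g i
      = g 0 * ∏ j ∈ Finset.univ.filter (fun j : Fin l => (j : ℕ) < m), g j.succ := by
  simp [Finset.prod_filter, Fin.prod_univ_succ]

lemma laurentPoly_modelIdeal_le : modelIdeal v l m π ≤ RingHom.ker (laurentPoly v l m π) := by
  have hfirst : ∑ j ∈ Finset.univ.filter (fun j : Fin l => (j : ℕ) < m), Pi.single j 1 =
      firstExponents l m := by
    ext j
    simp [firstExponents, Finset.sum_apply, Pi.single_apply]
  rw [modelIdeal, Ideal.span_le, Set.singleton_subset_iff, SetLike.mem_coe, RingHom.mem_ker,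
    map_sub, map_prod, prod_filter_le_eq_mul]
  simp [prod_single, single_mul_single, hfirst]

def toLaurent : ModelRing v l m π →+* AddMonoidAlgebra k (Fin l → ℤ) :=
  Ideal.Quotient.lift _ (laurentPoly v l m π) fun _ ha =>
    RingHom.mem_ker.1 (laurentPoly_modelIdeal_le v l m π ha)

lemma toLaurent_specialMonomial (b : v.integer) (n : Fin l → ℤ) (hn : IsSpecialIndex l m n) :
    toLaurent v l m π (specialMonomial v l m π b n) =
      single n ((b : k) * (π : k) ^ negDeg l m n) := by
  rw [toLaurent, specialMonomial, Ideal.Quotient.lift_mk]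
  simp only [map_mul, map_pow, map_prod,
    laurentPoly_C, laurentPoly_X_zero, laurentPoly_X_succ, single_pow, prod_single,
    single_mul_single, one_pow, Finset.prod_const_one, mul_one, zero_add]
  congr 1
  ext j
  simp only [Pi.add_apply, Pi.neg_apply, Pi.smul_apply, Finset.sum_apply, firstExponents,
    Pi.single_apply, smul_ite, smul_zero, Finset.sum_ite_eq, Finset.mem_univ, if_true]
  simp only [nsmul_eq_mul, mul_one]
  split_ifs with hj
  · have := neg_le_negDeg n hj
    omega
  · have := hn j (not_lt.1 hj)
    omega

variable {v l m π}

lemma monomialWeight_neg_firstExponents (s : Fin l → ℝ≥0) :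
    monomialWeight s (-firstExponents l m) =
      (∏ j ∈ Finset.univ.filter (fun j : Fin l => (j : ℕ) < m), s j)⁻¹ := by
  rw [monomialWeight, ← Finset.prod_inv_distrib, Finset.prod_filter]
  refine Finset.prod_congr rfl fun j _ => ?_
  simp only [firstExponents, Pi.neg_apply]
  split_ifs <;> simp

lemma monomialWeight_single (s : Fin l → ℝ≥0) (j : Fin l) :
    monomialWeight s (Pi.single j 1) = s j := by
  rw [monomialWeight, Fintype.prod_eq_single j fun i hi => by simp [hi]]
  simp

lemma gaussNorm_laurentPoly_le_one {s : Fin l → ℝ≥0} (hs0 : ∀ j, s j ≠ 0) (hs1 : ∀ j, s j ≤ 1)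
    (hsπ : v (π : k) ≤ ∏ j ∈ Finset.univ.filter (fun j : Fin l => (j : ℕ) < m), s j)
    (p : MvPolynomial (Fin (l + 1)) v.integer) : gaussNorm v s (laurentPoly v l m π p) ≤ 1 := by
  induction p using MvPolynomial.induction_on with
  | C a => simpa [gaussNorm_single] using (v.mem_integer_iff _).1 a.2
  | add p q hp hq =>
    rw [map_add]
    exact (gaussNorm_add_le v s _ _).trans (max_le hp hq)
  | mul_X p i hp =>
    have hX : ∃ d a, laurentPoly v l m π (X i) = single d a ∧ v a * monomialWeight s d ≤ 1 := by
      induction i using Fin.cases with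
      | zero =>
        refine ⟨_, _, laurentPoly_X_zero v l m π, ?_⟩
        rw [monomialWeight_neg_firstExponents]
        exact mul_inv_le_one_of_le₀ hsπ zero_le
      | succ j => exact ⟨_, _, laurentPoly_X_succ v l m π j, by simpa [monomialWeight_single] using hs1 j⟩
    obtain ⟨d, a, hXi, hda⟩ := hX
    rw [map_mul, mul_comm, hXi]
    exact (gaussNorm_single_mul_le v hs0 d a _).trans (mul_le_one' hda hp)

lemma gaussNorm_toLaurent_le_one {s : Fin l → ℝ≥0} (hs0 : ∀ j, s j ≠ 0) (hs1 : ∀ j, s j ≤ 1)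
    (hsπ : v (π : k) ≤ ∏ j ∈ Finset.univ.filter (fun j : Fin l => (j : ℕ) < m), s j)
    (x : ModelRing v l m π) : gaussNorm v s (toLaurent v l m π x) ≤ 1 := by
  obtain ⟨p, rfl⟩ := Ideal.Quotient.mk_surjective x
  exact gaussNorm_laurentPoly_le_one hs0 hs1 hsπ p

lemma mul_monomialWeight_le_of_mem_span {b b' : v.integer} {n n' : Fin l → ℤ}
    (hn : IsSpecialIndex l m n) (hn' : IsSpecialIndex l m n')
    (h : specialMonomial v l m π b' n' ∈ Ideal.span {specialMonomial v l m π b n})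
    {s : Fin l → ℝ≥0} (hs0 : ∀ j, s j ≠ 0) (hs1 : ∀ j, s j ≤ 1)
    (hsπ : v (π : k) ≤ ∏ j ∈ Finset.univ.filter (fun j : Fin l => (j : ℕ) < m), s j) :
    v (b' : k) * v (π : k) ^ (negDeg l m n' : ℤ) * monomialWeight s n' ≤
      v (b : k) * v (π : k) ^ (negDeg l m n : ℤ) * monomialWeight s n := by
  obtain ⟨c, hc⟩ := Ideal.mem_span_singleton'.1 h
  have hc' := congrArg (toLaurent v l m π) hc
  rw [map_mul, mul_comm, toLaurent_specialMonomial v l m π b n hn,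
    toLaurent_specialMonomial v l m π b' n' hn'] at hc'
  calc v (b' : k) * v (π : k) ^ (negDeg l m n' : ℤ) * monomialWeight s n'
      = gaussNorm v s (single n' ((b' : k) * (π : k) ^ negDeg l m n')) := by
        simp [gaussNorm_single]
    _ ≤ v ((b : k) * (π : k) ^ negDeg l m n) * monomialWeight s n *
          gaussNorm v s (toLaurent v l m π c) := by
        rw [← hc']
        exact gaussNorm_single_mul_le v hs0 _ _ _
    _ ≤ v (b : k) * v (π : k) ^ (negDeg l m n : ℤ) * monomialWeight s n := by
        simpa using mul_le_mul_right (gaussNorm_toLaurent_le_one hs0 hs1 hsπ c) _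

lemma mul_pow_le_of_mem_span {b b' : v.integer} {n n' : Fin l → ℤ}
    (hn : IsSpecialIndex l m n) (hn' : IsSpecialIndex l m n')
    (h : specialMonomial v l m π b' n' ∈ Ideal.span {specialMonomial v l m π b n})
    (j : Fin l) {x : ℝ≥0} (hx0 : x ≠ 0) (hx1 : x ≤ 1) (hxπ : (j : ℕ) < m → v (π : k) ≤ x) :
    v (b' : k) * v (π : k) ^ (negDeg l m n' : ℤ) * x ^ n' j ≤
      v (b : k) * v (π : k) ^ (negDeg l m n : ℤ) * x ^ n j := by
  have hπ1 : v (π : k) ≤ 1 := π.2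
  simpa [monomialWeight_update_one] using mul_monomialWeight_le_of_mem_span hn hn' h
    (s := Function.update 1 j x) (fun i => by by_cases hi : i = j <;> simp [hi, hx0])
    (fun i => by by_cases hi : i = j <;> simp [hi, hx1])
    (by
      by_cases hj : (j : ℕ) < m
      · simpa [Finset.prod_update_of_mem, hj] using hxπ hj
      · simpa [Finset.prod_update_of_notMem, hj] using hπ1)

end Laurent

lemma mul_pow_dvd_of_le {k : Type*} [Field k] {v : Valuation k ℝ≥0} {b b' π : v.integer}
    (hπ : π ≠ 0) {d d' κ : ℕ} (hd : d' ≤ d + κ)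
    (h : v (b' : k) * v (π : k) ^ d' ≤ v (b : k) * v (π : k) ^ d * v (π : k) ^ κ) :
    b * π ^ (d + κ - d') ∣ b' := by
  refine (Valuation.integer.integers v).dvd_of_le ?_
  have hP : 0 < v (π : k) := pos_of_ne_zero (v.ne_zero_iff.2 (by simpa using hπ))
  have hcancel : v (b' : k) * v (π : k) ^ d' ≤
      v (b : k) * v (π : k) ^ (d + κ - d') * v (π : k) ^ d' := by
    rwa [mul_assoc, ← pow_add, Nat.sub_add_cancel hd, pow_add, ← mul_assoc]
  change v (b' : k) ≤ v ((b * π ^ (d + κ - d') : v.integer) : k)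
  simpa using le_of_mul_le_mul_right hcancel (pow_pos hP _)

section ModelMonomial

variable {k : Type*} [Field k] (v : Valuation k ℝ≥0) (l m : ℕ) (π : v.integer)

def modelMonomial (c : v.integer) (e : ℕ) (α : Fin l → ℕ) : ModelRing v l m π :=
  Ideal.Quotient.mk _ (C c * X 0 ^ e * ∏ j, X j.succ ^ α j)

variable {v l m π}

lemma specialMonomial_eq_modelMonomial (b : v.integer) (n : Fin l → ℤ) :
    specialMonomial v l m π b n = modelMonomial v l m π b (negDeg l m n)
      (fun j => if (j : ℕ) < m then (n j + negDeg l m n).toNat else (n j).toNat) :=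
  rfl

lemma modelMonomial_mul (c c' : v.integer) (e e' : ℕ) (α α' : Fin l → ℕ) :
    modelMonomial v l m π c e α * modelMonomial v l m π c' e' α' =
      modelMonomial v l m π (c * c') (e + e') (α + α') := by
  rw [modelMonomial, modelMonomial, modelMonomial, ← map_mul]
  congr 1
  simp only [C_mul, pow_add, Pi.add_apply, Finset.prod_mul_distrib]
  ring

lemma mk_prod_X_eq_mk_C :
    Ideal.Quotient.mk (modelIdeal v l m π)
        (∏ i ∈ Finset.univ.filter (fun i : Fin (l + 1) => (i : ℕ) ≤ m), X i) =
      Ideal.Quotient.mk (modelIdeal v l m π) (C π) :=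
  Ideal.Quotient.eq.2 (Ideal.subset_span rfl)

lemma modelMonomial_one_eq_pi_pow (μ : ℕ) :
    modelMonomial v l m π 1 μ (fun j => if (j : ℕ) < m then μ else 0) =
      modelMonomial v l m π (π ^ μ) 0 0 := by
  have hprod : (C 1 * X 0 ^ μ * ∏ j : Fin l, X j.succ ^ (if (j : ℕ) < m then μ else 0) :
      MvPolynomial (Fin (l + 1)) v.integer) =
      (∏ i ∈ Finset.univ.filter (fun i : Fin (l + 1) => (i : ℕ) ≤ m), X i) ^ μ := by
    rw [prod_filter_le_eq_mul, mul_pow, ← Finset.prod_pow, Finset.prod_filter, map_one, one_mul]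
    congr 1
    exact Finset.prod_congr rfl fun j _ => by split_ifs <;> simp
  rw [modelMonomial, hprod, map_pow, mk_prod_X_eq_mk_C, modelMonomial]
  simp

lemma modelMonomial_shift (c : v.integer) (e μ : ℕ) (α : Fin l → ℕ) :
    modelMonomial v l m π c (e + μ) (α + fun j : Fin l => if (j : ℕ) < m then μ else 0) =
      modelMonomial v l m π (c * π ^ μ) e α := by
  have h := modelMonomial_mul (m := m) (π := π) c 1 e μ α (fun j => if (j : ℕ) < m then μ else 0)
  rw [mul_one] at h
  rw [← h, modelMonomial_one_eq_pi_pow, modelMonomial_mul, add_zero, add_zero]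

lemma specialMonomial_mem_span_of_le (hπ : π ≠ 0) {b b' : v.integer} {n n' : Fin l → ℤ}
    (hn : IsSpecialIndex l m n)
    (h1 : v (b' : k) * v (π : k) ^ (negDeg l m n' : ℤ) ≤
      v (b : k) * v (π : k) ^ (negDeg l m n : ℤ))
    (h2 : ∀ j : Fin l, (j : ℕ) < m →
      v (b' : k) * v (π : k) ^ (negDeg l m n' : ℤ) * v (π : k) ^ (n' j) ≤
        v (b : k) * v (π : k) ^ (negDeg l m n : ℤ) * v (π : k) ^ (n j))
    (h3 : ∀ j : Fin l, m ≤ (j : ℕ) → n j ≤ n' j) :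
    specialMonomial v l m π b' n' ∈ Ideal.span {specialMonomial v l m π b n} := by
  set D := negDeg l m n
  set D' := negDeg l m n'
  have hP : v (π : k) ≠ 0 := v.ne_zero_iff.2 (by simpa using hπ)
  set κ := (Finset.univ.filter (fun j : Fin l => (j : ℕ) < m)).sup fun j => (n j - n' j).toNat
  have hκ : ∀ j : Fin l, (j : ℕ) < m → n j - n' j ≤ κ := fun j hj => by
    have : (n j - n' j).toNat ≤ κ :=
      Finset.le_sup (f := fun j => (n j - n' j).toNat) (by simpa using hj)
    omega
  have hκ_le := le_mul_zpow_sup_toNat (Finset.univ.filter (fun j : Fin l => (j : ℕ) < m)) hP h1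
    fun j hj => h2 j (Finset.mem_filter.1 hj).2
  have hD' : D' ≤ D + κ := negDeg_le fun j hj => by
    have := neg_le_negDeg n hj
    have := hκ j hj
    omega
  obtain ⟨c, hc⟩ := mul_pow_dvd_of_le hπ hD' (by simpa using hκ_le)
  refine Ideal.mem_span_singleton'.2 ⟨modelMonomial v l m π c κ (fun j =>
    if (j : ℕ) < m then (n' j - n j + κ).toNat else (n' j - n j).toNat), ?_⟩
  rw [specialMonomial_eq_modelMonomial, specialMonomial_eq_modelMonomial, modelMonomial_mul,
    hc, show b * π ^ (D + κ - D') * c = c * b * π ^ (D + κ - D') by ring,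
    ← modelMonomial_shift]
  congr 1
  · omega
  · ext j
    simp only [Pi.add_apply]
    split_ifs with hj
    · have := neg_le_negDeg n hj
      have := neg_le_negDeg n' hj
      have := hκ j hj
      omega
    · have := h3 j (not_lt.1 hj)
      have := hn j (not_lt.1 hj)
      omega

end ModelMonomial

theorem specialMonomial_dvd_iff_general
    {k : Type*} [Field k] (v : Valuation k ℝ≥0)
    (l m : ℕ) (π : v.integer) (hπ : π ≠ 0)
    (b b' : v.integer) (hb' : b' ≠ 0)
    (n n' : Fin l → ℤ) (hn : IsSpecialIndex l m n) (hn' : IsSpecialIndex l m n') :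
    specialMonomial v l m π b' n' ∈ Ideal.span {specialMonomial v l m π b n} ↔
      (v (b' : k) * v (π : k) ^ (negDeg l m n' : ℤ) ≤
        v (b : k) * v (π : k) ^ (negDeg l m n : ℤ)) ∧
      (∀ j : Fin l, (j : ℕ) < m →
        v (b' : k) * v (π : k) ^ (negDeg l m n' : ℤ) * v (π : k) ^ (n' j) ≤
          v (b : k) * v (π : k) ^ (negDeg l m n : ℤ) * v (π : k) ^ (n j)) ∧
      (∀ j : Fin l, m ≤ (j : ℕ) → n j ≤ n' j) := by
  have hP : v (π : k) ≠ 0 := v.ne_zero_iff.2 (by simpa using hπ)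
  refine ⟨fun h => ⟨?_, fun j _ => ?_, fun j hj => ?_⟩,
    fun ⟨h1, h2, h3⟩ => specialMonomial_mem_span_of_le hπ hn h1 h2 h3⟩
  · simpa using mul_monomialWeight_le_of_mem_span hn hn' h (s := 1) (by simp) (by simp)
      (by simpa using (v.mem_integer_iff _).1 π.2)
  · exact mul_pow_le_of_mem_span hn hn' h j hP π.2 fun _ => le_rfl
  · have hA : v (b' : k) * v (π : k) ^ (negDeg l m n' : ℤ) ≠ 0 :=
      mul_ne_zero (v.ne_zero_iff.2 (by simpa using hb')) (zpow_ne_zero _ hP)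
    exact le_of_forall_mul_zpow_le hA fun ε hε0 hε1 =>
      mul_pow_le_of_mem_span hn hn' h j hε0 hε1 fun hj' => absurd hj' (not_lt.2 hj)

theorem specialMonomial_dvd_iff
    {k : Type*} [Field k] (v : Valuation k ℝ≥0)
    (hv : ∃ x : k, v x ≠ 0 ∧ v x ≠ 1)
    (l m : ℕ) (hm : m ≤ l) (π : v.integer) (hπ : π ≠ 0)
    (b b' : v.integer) (hb : b ≠ 0) (hb' : b' ≠ 0)
    (n n' : Fin l → ℤ) (hn : IsSpecialIndex l m n) (hn' : IsSpecialIndex l m n') :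
    specialMonomial v l m π b' n' ∈ Ideal.span {specialMonomial v l m π b n} ↔
      (v (b' : k) * v (π : k) ^ (negDeg l m n' : ℤ) ≤
        v (b : k) * v (π : k) ^ (negDeg l m n : ℤ)) ∧
      (∀ j : Fin l, (j : ℕ) < m →
        v (b' : k) * v (π : k) ^ (negDeg l m n' : ℤ) * v (π : k) ^ (n' j) ≤
          v (b : k) * v (π : k) ^ (negDeg l m n : ℤ) * v (π : k) ^ (n j)) ∧
      (∀ j : Fin l, m ≤ (j : ℕ) → n j ≤ n' j) :=
  specialMonomial_dvd_iff_general v l m π hπ b b' hb' n n' hn hn'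

end Altered
end
end

section
/- Let f_1,…,f_p and g_1,…,g_q be affine-linear functions on a convex subset C of ℝ^n with nonempty interior. If the function x ↦ max_i f_i(x) + max_j g_j(x) is affine-linear on C, then max_i f_i and max_j g_j are each affine-linear on C. -/
/-!
STATEMENT 8: Let f₁,…,f_p and g₁,…,g_q be affine-linear functions on a convex
subset C of ℝⁿ with nonempty interior. If x ↦ max_i f_i(x) + max_j g_j(x) is
affine-linear on C, then max_i f_i and max_j g_j are each affine-linear on C.
-/

theorem sum_of_maxes_affine
    {n : ℕ} (C : Set (Fin n → ℝ)) (hC : Convex ℝ C) (hint : (interior C).Nonempty)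
    {ι κ : Type*} [Fintype ι] [Fintype κ] [Nonempty ι] [Nonempty κ]
    (f : ι → ((Fin n → ℝ) →ᵃ[ℝ] ℝ)) (g : κ → ((Fin n → ℝ) →ᵃ[ℝ] ℝ))
    (φ : (Fin n → ℝ) →ᵃ[ℝ] ℝ)
    (hφ : ∀ x ∈ C,
      (Finset.univ.sup' Finset.univ_nonempty fun i => f i x) +
      (Finset.univ.sup' Finset.univ_nonempty fun j => g j x) = φ x) :
    (∃ ψ : (Fin n → ℝ) →ᵃ[ℝ] ℝ, ∀ x ∈ C,
        (Finset.univ.sup' Finset.univ_nonempty fun i => f i x) = ψ x) ∧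
    (∃ χ : (Fin n → ℝ) →ᵃ[ℝ] ℝ, ∀ x ∈ C,
        (Finset.univ.sup' Finset.univ_nonempty fun j => g j x) = χ x) := by
  obtain ⟨x0, hx0⟩ := hint
  have hx0C : x0 ∈ C := interior_subset hx0
  obtain ⟨i0, -, hi0⟩ := Finset.exists_mem_eq_sup' (Finset.univ_nonempty) (fun i => f i x0)
  obtain ⟨j0, -, hj0⟩ := Finset.exists_mem_eq_sup' (Finset.univ_nonempty) (fun j => g j x0)
  set h : (Fin n → ℝ) →ᵃ[ℝ] ℝ := φ - (f i0 + g j0) with hh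
  have happ : ∀ x, h x = φ x - (f i0 x + g j0 x) := by
    intro x; simp [hh]
  have hnn : ∀ x ∈ C, 0 ≤ h x := by
    intro x hx
    have h1 : f i0 x ≤ Finset.univ.sup' Finset.univ_nonempty fun i => f i x :=
      Finset.le_sup' (fun i => f i x) (Finset.mem_univ i0)
    have h2 : g j0 x ≤ Finset.univ.sup' Finset.univ_nonempty fun j => g j x :=
      Finset.le_sup' (fun j => g j x) (Finset.mem_univ j0)
    have h3 := hφ x hx
    rw [happ]; linarith
  have hx00 : h x0 = 0 := by
    have h3 := hφ x0 hx0C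
    rw [happ]; rw [hi0, hj0] at h3; linarith
  have hzero : ∀ x ∈ C, h x = 0 := by
    intro x hx
    obtain ⟨ε, hε, hball⟩ := Metric.isOpen_iff.mp isOpen_interior x0 hx0
    set d := dist x0 x with hd
    have hd0 : 0 ≤ d := dist_nonneg
    set δ : ℝ := ε / (2 * (d + 1)) with hδdef
    have hδ : 0 < δ := by positivity
    have hy : AffineMap.lineMap x x0 (1 + δ) ∈ C := by
      apply interior_subset; apply hball
      have : AffineMap.lineMap x x0 (1 + δ) - x0 = δ • (x0 - x) := by
        rw [AffineMap.lineMap_apply_module]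
        module
      rw [Metric.mem_ball, dist_eq_norm, this, norm_smul, Real.norm_eq_abs,
        abs_of_pos hδ]
      have hnx : ‖x0 - x‖ = d := by rw [hd, dist_eq_norm]
      rw [hnx, hδdef]
      rw [div_mul_eq_mul_div, div_lt_iff₀ (by positivity)]
      nlinarith
    have hyv := hnn _ hy
    rw [AffineMap.apply_lineMap, AffineMap.lineMap_apply_module, hx00] at hyv
    have hxv := hnn x hx
    simp only [smul_eq_mul] at hyv
    nlinarith
  constructor
  · refine ⟨f i0, fun x hx => ?_⟩
    have h0 := hzero x hx
    rw [happ] at h0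
    have h3 := hφ x hx
    have h1 : f i0 x ≤ Finset.univ.sup' Finset.univ_nonempty fun i => f i x :=
      Finset.le_sup' (fun i => f i x) (Finset.mem_univ i0)
    have h2 : g j0 x ≤ Finset.univ.sup' Finset.univ_nonempty fun j => g j x :=
      Finset.le_sup' (fun j => g j x) (Finset.mem_univ j0)
    linarith
  · refine ⟨g j0, fun x hx => ?_⟩
    have h0 := hzero x hx
    rw [happ] at h0
    have h3 := hφ x hx
    have h1 : f i0 x ≤ Finset.univ.sup' Finset.univ_nonempty fun i => f i x :=
      Finset.le_sup' (fun i => f i x) (Finset.mem_univ i0)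
    have h2 : g j0 x ≤ Finset.univ.sup' Finset.univ_nonempty fun j => g j x :=
      Finset.le_sup' (fun j => g j x) (Finset.mem_univ j0)
    linarith
end
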